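/- An up-down word w = w₁w₂⋯w_ℓ avoids the vincular pattern 2-13 if and only if it avoids the classical pattern 213 (i.e., no indices j₁ < j₂ < j₃ with w_{j₂} < w_{j₁} < w_{j₃}). -/
import Mathlib


/-- `w` is an up-down word: `w₀ < w₁ > w₂ < w₃ > ⋯` (0-indexed). -/
def IsUpDown {l k : ℕ} (w : Fin l → Fin k) : Prop :=
  ∀ j : ℕ, ∀ h : j + 1 < l,
    (j % 2 = 0 → w ⟨j, by omega⟩ < w ⟨j + 1, h⟩) ∧
    (j % 2 = 1 → w ⟨j + 1, h⟩ < w ⟨j, by omega⟩)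

/-- `w` avoids the vincular pattern 2-13: no `a < j` with
`w j < w a < w (j+1)` (the last two letters adjacent). -/
def AvoidsV2_13 {l k : ℕ} (w : Fin l → Fin k) : Prop :=
  ∀ a j : ℕ, ∀ haj : a < j, ∀ h : j + 1 < l,
    ¬ (w ⟨j, by omega⟩ < w ⟨a, by omega⟩ ∧ w ⟨a, by omega⟩ < w ⟨j + 1, h⟩)

/-- `w` avoids the classical pattern 213. -/
def Avoids213 {l k : ℕ} (w : Fin l → Fin k) : Prop :=
  ¬ ∃ j₁ j₂ j₃ : Fin l, j₁ < j₂ ∧ j₂ < j₃ ∧ w j₂ < w j₁ ∧ w j₁ < w j₃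

/-- An up-down word avoids the vincular pattern 2-13 iff it avoids the
classical pattern 213. -/
theorem stmt_14 (l k : ℕ) (w : Fin l → Fin k) (hud : IsUpDown w) :
    AvoidsV2_13 w ↔ Avoids213 w := by
  constructor
  · -- hard direction
    intro hv
    rintro ⟨j₁, j₂, j₃, h12, h23, hv21, hv13⟩
    -- set of candidates
    set S : Finset (Fin l) :=
      Finset.univ.filter (fun j => j₁ < j ∧ j < j₃ ∧ w j < w j₁) with hS
    have hne : S.Nonempty := ⟨j₂, by simp [hS, h12, h23, hv21]⟩
    set j : Fin l := S.max' hne with hj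
    have hjmem : j ∈ S := S.max'_mem hne
    have hjprop : j₁ < j ∧ j < j₃ ∧ w j < w j₁ := by
      simpa [hS] using hjmem
    obtain ⟨h1j, hj3, hwj⟩ := hjprop
    have hj3v : j.val < j₃.val := hj3
    have hj1l : j.val + 1 < l := by omega
    set j' : Fin l := ⟨j.val + 1, hj1l⟩ with hj'
    have hjj' : j < j' := by
      simp [hj', Fin.lt_def]
    have hj'le3 : j'.val ≤ j₃.val := by
      simp [hj']; omega
    have hwjj : w ⟨j.val, by omega⟩ = w j := by congr 1
    -- j' not in S (else contradicts maximality)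
    have hnotS : j' ∉ S := fun hmem => absurd (S.le_max' j' hmem) (not_le.mpr hjj')
    rcases lt_trichotomy (w j') (w j₁) with hlt | heq | hgt
    · -- w j' < w j₁ : either j' = j₃ (contradiction) or j' ∈ S
      rcases eq_or_lt_of_le hj'le3 with he | hl
      · have : j' = j₃ := Fin.ext he
        rw [this] at hlt
        exact absurd hv13 (not_lt.mpr hlt.le)
      · exact hnotS (Finset.mem_filter.mpr
          ⟨Finset.mem_univ _, h1j.trans hjj', hl, hlt⟩)
    · -- w j' = w j₁ : parity argument
      have hwjlt : w j < w j' := heq ▸ hwj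
      have hj'ne3 : j' ≠ j₃ := by
        intro h
        rw [h] at heq
        exact absurd hv13 (not_lt.mpr heq.le)
      have hj'lt3 : j'.val < j₃.val := lt_of_le_of_ne hj'le3 (fun h => hj'ne3 (Fin.ext h))
      have heven : j.val % 2 = 0 := by
        by_contra hodd
        have hodd' : j.val % 2 = 1 := by omega
        have := (hud j.val hj1l).2 hodd'
        rw [hwjj] at this
        exact absurd hwjlt (not_lt.mpr this.le)
      have hodd1 : (j.val + 1) % 2 = 1 := by omega
      have hj2l : j.val + 1 + 1 < l := by omega
      have hdown := (hud (j.val + 1) hj2l).2 hodd1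
      -- w ⟨j.val+2⟩ < w j' = w j₁
      have hw2 : w ⟨j.val + 1 + 1, hj2l⟩ < w j₁ := by
        rw [← heq]
        show w ⟨j.val + 1 + 1, hj2l⟩ < w ⟨j.val + 1, hj1l⟩
        exact hdown
      have hne3 : j.val + 2 ≠ j₃.val := by
        intro h
        have : (⟨j.val + 1 + 1, hj2l⟩ : Fin l) = j₃ := Fin.ext (show j.val + 1 + 1 = j₃.val by omega)
        rw [this] at hw2
        exact absurd hv13 (not_lt.mpr hw2.le)
      have h1jv : j₁.val < j.val := h1j
      have hj'v : j'.val = j.val + 1 := rfl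
      have hj'lt3' : j.val + 1 < j₃.val := by rw [← hj'v]; exact hj'lt3
      have hmem2 : (⟨j.val + 1 + 1, hj2l⟩ : Fin l) ∈ S :=
        Finset.mem_filter.mpr ⟨Finset.mem_univ _,
          Fin.lt_def.mpr (show j₁.val < j.val + 1 + 1 by omega),
          Fin.lt_def.mpr (show j.val + 1 + 1 < j₃.val by omega), hw2⟩
      have hle := S.le_max' _ hmem2
      rw [← hj] at hle
      have hle' : j.val + 1 + 1 ≤ j.val := hle
      omega
    · -- w j₁ < w j' : vincular occurrence with a = j₁
      have h1jv : j₁.val < j.val := h1j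
      exact hv j₁.val j.val h1jv hj1l ⟨by simpa [hwjj] using hwj, by simpa using hgt⟩
  · -- easy direction
    intro ha
    intro a j haj h hocc
    exact ha ⟨⟨a, by omega⟩, ⟨j, by omega⟩, ⟨j + 1, h⟩, haj, by simp [Fin.lt_def], hocc.1, hocc.2⟩
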